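/- Let (V, w, φ) be an irreducible representation of a bivariate assignment valuation f : T_Φ → ℝ, and let p ∈ ℝ² be such that the maximizer set D_f(p) is two-dimensional. If p ≠ (w(i,1), w(i,2)) for every i ∈ V, then D_f(p) is of zero-type. -/

import Mathlib

open Finset

/-- Embedding of `ℤ²` into `ℝ²`. -/
def toR (x : Fin 2 → ℤ) : Fin 2 → ℝ := fun j => (x j : ℝ)

/-- `chi none = χ₀` is the zero vector, `chi (some i) = χ_i` is the `i`-th unit vector. -/
def chi : Option (Fin 2) → (Fin 2 → ℤ)
  | none => 0
  | some i => Pi.single i 1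

/-- A set `S ⊆ ℤ²` is M♮-convex if for all `x, y ∈ S` and every index `i` with `x^i > y^i`
there exists `j` with `x^j < y^j` or `j = 0` such that `x − χ_i + χ_j ∈ S` and
`y + χ_i − χ_j ∈ S`. -/
def MnConvexSet (S : Set (Fin 2 → ℤ)) : Prop :=
  ∀ x ∈ S, ∀ y ∈ S, ∀ i : Fin 2, y i < x i →
    ∃ j : Option (Fin 2), (∀ j', j = some j' → x j' < y j') ∧
      x - Pi.single i 1 + chi j ∈ S ∧ y + Pi.single i 1 - chi j ∈ S

/-- `T_Φ = { x ∈ ℤ²_{≥0} : x¹ + x² ≤ Φ }`. -/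
def TPhi (Φ : ℤ) : Set (Fin 2 → ℤ) := {x | 0 ≤ x 0 ∧ 0 ≤ x 1 ∧ x 0 + x 1 ≤ Φ}

/-- M♮-concavity of a function on `T_Φ` (exchange property of its extension by `−∞`). -/
def MnConcaveOn (Φ : ℤ) (f : (Fin 2 → ℤ) → ℝ) : Prop :=
  ∀ x ∈ TPhi Φ, ∀ y ∈ TPhi Φ, ∀ i : Fin 2, y i < x i →
    ∃ j : Option (Fin 2), (∀ j', j = some j' → x j' < y j') ∧
      x - Pi.single i 1 + chi j ∈ TPhi Φ ∧ y + Pi.single i 1 - chi j ∈ TPhi Φ ∧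
      f x + f y ≤ f (x - Pi.single i 1 + chi j) + f (y + Pi.single i 1 - chi j)

noncomputable def lam1 (S : Set (Fin 2 → ℤ)) : ℤ := sInf ((fun x => x 0) '' S)
noncomputable def mu1 (S : Set (Fin 2 → ℤ)) : ℤ := sSup ((fun x => x 0) '' S)
noncomputable def lam2 (S : Set (Fin 2 → ℤ)) : ℤ := sInf ((fun x => x 1) '' S)
noncomputable def mu2 (S : Set (Fin 2 → ℤ)) : ℤ := sSup ((fun x => x 1) '' S)
noncomputable def lam0 (S : Set (Fin 2 → ℤ)) : ℤ := sInf ((fun x => x 0 + x 1) '' S)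
noncomputable def mu0 (S : Set (Fin 2 → ℤ)) : ℤ := sSup ((fun x => x 0 + x 1) '' S)

/-- Boundedness of a subset of `ℤ²`. -/
def BoundedSet (S : Set (Fin 2 → ℤ)) : Prop := ∃ M : ℤ, ∀ x ∈ S, |x 0| ≤ M ∧ |x 1| ≤ M

/-- The quantity `ℓ_LH(S) − ℓ_UH(S) = (μ₁ − (λ₀ − λ₂)) − ((μ₀ − μ₂) − λ₁)`;
`S` is of positive-type if it is `> 0`, of zero-type if it equals `0`, and of
negative-type if it is `< 0`. -/
noncomputable def typeQ (S : Set (Fin 2 → ℤ)) : ℤ :=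
  (mu1 S - (lam0 S - lam2 S)) - ((mu0 S - mu2 S) - lam1 S)

/-- `⟨p,x⟩ = p¹x¹ + p²x²`. -/
def inner2 (p : Fin 2 → ℝ) (x : Fin 2 → ℤ) : ℝ := p 0 * x 0 + p 1 * x 1

/-- The maximizer set `D_f(p)`. -/
def maximizerSet (Φ : ℤ) (f : (Fin 2 → ℤ) → ℝ) (p : Fin 2 → ℝ) : Set (Fin 2 → ℤ) :=
  {x | x ∈ TPhi Φ ∧ ∀ y ∈ TPhi Φ, f y - inner2 p y ≤ f x - inner2 p x}

/-- A subset of `ℤ²` is two-dimensional if it is not contained in any affine line of `ℝ²`. -/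
def TwoDimensional (S : Set (Fin 2 → ℤ)) : Prop :=
  ¬ ∃ a b c : ℝ, (a ≠ 0 ∨ b ≠ 0) ∧ ∀ x ∈ S, a * (x 0 : ℝ) + b * (x 1 : ℝ) = c

/-- Feasible assignments `y` for demand vector `x` and supplies `φ`. -/
def FeasibleAssign {V : Type} [Fintype V] (φ : V → ℤ) (x : Fin 2 → ℤ)
    (y : V → Fin 2 → ℤ) : Prop :=
  (∀ i j, 0 ≤ y i j) ∧ (∀ j, ∑ i, y i j = x j) ∧ (∀ i, y i 0 + y i 1 ≤ φ i)

/-- `f` is the assignment valuation represented by `(V, w, φ)`. -/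
def IsAssignmentValuation (Φ : ℤ) (f : (Fin 2 → ℤ) → ℝ) (V : Type) [Fintype V]
    (w : V → Fin 2 → ℝ) (φ : V → ℤ) : Prop :=
  (∀ i, 0 < φ i) ∧ (∑ i, φ i = Φ) ∧
  ∀ x ∈ TPhi Φ, IsGreatest
    {s : ℝ | ∃ y : V → Fin 2 → ℤ, FeasibleAssign φ x y ∧
       s = ∑ i, (w i 0 * (y i 0 : ℝ) + w i 1 * (y i 1 : ℝ))} (f x)

/-- A hexagonalization of `T_Φ`: nonempty M♮-convex sets covering `T_Φ` whose convex hulls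
have pairwise disjoint interiors. -/
def IsHexagonalization (Φ : ℤ) {q : ℕ} (H : Fin q → Set (Fin 2 → ℤ)) : Prop :=
  (∀ i, (H i).Nonempty) ∧ (∀ i, MnConvexSet (H i)) ∧ (⋃ i, H i) = TPhi Φ ∧
  ∀ i j : Fin q, i ≠ j →
    interior (convexHull ℝ (toR '' H i)) ∩ interior (convexHull ℝ (toR '' H j)) = ∅

/-- A feasible hexagonalization: every member is of positive- or zero-type, and at least one
member is of positive-type. -/
def IsFeasibleHex (Φ : ℤ) {q : ℕ} (H : Fin q → Set (Fin 2 → ℤ)) : Prop :=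
  IsHexagonalization Φ H ∧ (∀ i, 0 ≤ typeQ (H i)) ∧ ∃ i, 0 < typeQ (H i)


/-!
Subtracting `⟨p, ·⟩` turns `f` into the assignment valuation with weights `w i - p`, so we may
take `p = 0`. The maximum of `f` on `T_Φ` then decouples over the agents: agent `i` contributes
at most `φ i * max (w i 0) (w i 1) 0`, and `D_f(0)` is the Minkowski sum of the sets of loads
attaining this. By complementary slackness each of these sets is a point, a segment of length
`φ i` in direction `e₀`, `e₁` or `e₀ - e₁`, or, exactly when `w i = 0`, the whole triangle
`T_{φ i}`. Such a Minkowski sum is a hexagon whose `ℓ_LH - ℓ_UH` is the total size of its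
triangle summands, i.e. `∑_{w i = p} φ i`, which vanishes when `p` differs from every `w i`.
-/

open Pointwise

/-- The Minkowski sum of the point `(A, B)`, the diagonal segment from `(0, S)` to `(S, 0)`,
the axis segments `[0, U] • e₀` and `[0, W] • e₁`, and the triangle `T_T`. -/
def hexagon (A B S U W T : ℤ) : Set (Fin 2 → ℤ) :=
  {x | ∃ s u w t₀ t₁ : ℤ, 0 ≤ s ∧ s ≤ S ∧ 0 ≤ u ∧ u ≤ U ∧ 0 ≤ w ∧ w ≤ W ∧
    0 ≤ t₀ ∧ 0 ≤ t₁ ∧ t₀ + t₁ ≤ T ∧ x 0 = A + s + u + t₀ ∧ x 1 = B + (S - s) + w + t₁}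

theorem csInf_image_eq_of_forall_le {α β : Type*} [ConditionallyCompleteLattice β] {s : Set α}
    {g : α → β} {a : α} (ha : a ∈ s) (h : ∀ x ∈ s, g a ≤ g x) : sInf (g '' s) = g a :=
  IsLeast.csInf_eq ⟨Set.mem_image_of_mem g ha, Set.forall_mem_image.2 h⟩

theorem csSup_image_eq_of_forall_le {α β : Type*} [ConditionallyCompleteLattice β] {s : Set α}
    {g : α → β} {a : α} (ha : a ∈ s) (h : ∀ x ∈ s, g x ≤ g a) : sSup (g '' s) = g a :=
  IsGreatest.csSup_eq ⟨Set.mem_image_of_mem g ha, Set.forall_mem_image.2 h⟩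

section Hexagon

variable {A B S U W T : ℤ}

theorem mem_hexagon_iff (hS : 0 ≤ S) (hU : 0 ≤ U) (hW : 0 ≤ W) (hT : 0 ≤ T)
    {x : Fin 2 → ℤ} :
    x ∈ hexagon A B S U W T ↔
      A ≤ x 0 ∧ x 0 ≤ A + S + U + T ∧ B ≤ x 1 ∧ x 1 ≤ B + S + W + T ∧
        A + B + S ≤ x 0 + x 1 ∧ x 0 + x 1 ≤ A + B + S + U + W + T := by
  constructor
  · rintro ⟨s, u, w, t₀, t₁, h⟩
    omega
  · intro hx
    -- the least admissible diagonal share: what remains in direction `e₀` then fits in `U + T`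
    set s := max (max 0 (S - (x 1 - B))) (x 0 - A - U - T)
    set u := min U (x 0 - A - s)
    set w := min W (x 1 - B - (S - s))
    exact ⟨s, u, w, x 0 - A - s - u, x 1 - B - (S - s) - w, by omega⟩

theorem hexagon_nonempty (hS : 0 ≤ S) (hU : 0 ≤ U) (hW : 0 ≤ W) (hT : 0 ≤ T) :
    (hexagon A B S U W T).Nonempty :=
  ⟨![A, B + S], 0, 0, 0, 0, 0, by simp [hS, hU, hW, hT]⟩

theorem typeQ_hexagon (hS : 0 ≤ S) (hU : 0 ≤ U) (hW : 0 ≤ W) (hT : 0 ≤ T) :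
    typeQ (hexagon A B S U W T) = T := by
  have mem := fun x => mem_hexagon_iff (A := A) (B := B) hS hU hW hT (x := x)
  have h₁ : ![A, B + S] ∈ hexagon A B S U W T := (mem _).2 (by simp; omega)
  have h₂ : ![A + S + U + T, B] ∈ hexagon A B S U W T := (mem _).2 (by simp; omega)
  have h₃ : ![A, B + S + W + T] ∈ hexagon A B S U W T := (mem _).2 (by simp; omega)
  have h₄ : ![A + S + U, B + W + T] ∈ hexagon A B S U W T := (mem _).2 (by simp; omega)
  have bounds := fun x hx => (mem x).1 hx
  rw [typeQ, lam1, mu1, lam2, mu2, lam0, mu0,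
    csInf_image_eq_of_forall_le (g := fun x => x 0) h₁ fun x hx => (bounds x hx).1,
    csSup_image_eq_of_forall_le (g := fun x => x 0) h₂ fun x hx => (bounds x hx).2.1,
    csInf_image_eq_of_forall_le (g := fun x => x 1) h₂ fun x hx => (bounds x hx).2.2.1,
    csSup_image_eq_of_forall_le (g := fun x => x 1) h₃ fun x hx => (bounds x hx).2.2.2.1,
    csInf_image_eq_of_forall_le (g := fun x => x 0 + x 1) h₁ fun x hx => by
      simp; linarith [(bounds x hx).2.2.2.2.1],
    csSup_image_eq_of_forall_le (g := fun x => x 0 + x 1) h₄ fun x hx => by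
      simp; linarith [(bounds x hx).2.2.2.2.2]]
  simp
  ring

theorem mem_hexagon_ite_iff {P₀ P₁ Z : Prop} [Decidable P₀] [Decidable P₁] [Decidable Z]
    (hZ : ¬P₀ → ¬P₁ → Z) {φ : ℤ} (hφ : 0 ≤ φ) {y : Fin 2 → ℤ} :
    y ∈ hexagon (if P₀ ∧ ¬P₁ ∧ ¬Z then φ else 0) (if P₁ ∧ ¬P₀ ∧ ¬Z then φ else 0)
        (if P₀ ∧ P₁ ∧ ¬Z then φ else 0) (if P₀ ∧ ¬P₁ ∧ Z then φ else 0)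
        (if P₁ ∧ ¬P₀ ∧ Z then φ else 0) (if P₀ ∧ P₁ ∧ Z then φ else 0) ↔
      0 ≤ y 0 ∧ 0 ≤ y 1 ∧ y 0 + y 1 ≤ φ ∧
        (¬P₀ → y 0 = 0) ∧ (¬P₁ → y 1 = 0) ∧ (¬Z → y 0 + y 1 = φ) := by
  rw [mem_hexagon_iff (ite_nonneg hφ le_rfl) (ite_nonneg hφ le_rfl) (ite_nonneg hφ le_rfl)
    (ite_nonneg hφ le_rfl)]
  by_cases h₀ : P₀ <;> by_cases h₁ : P₁ <;> by_cases hz : Z <;>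
    simp [h₀, h₁, hz] at hZ ⊢ <;> omega

end Hexagon

theorem Finset.exists_sum_eq_of_le_sum {ι : Type*} [DecidableEq ι] (s : Finset ι) {c : ι → ℤ}
    (hc : ∀ i, 0 ≤ c i) {d : ℤ} (hd₀ : 0 ≤ d) (hd : d ≤ ∑ i ∈ s, c i) :
    ∃ g : ι → ℤ, (∀ i, 0 ≤ g i ∧ g i ≤ c i) ∧ ∑ i ∈ s, g i = d := by
  induction s using Finset.induction_on generalizing d with
  | empty => exact ⟨0, fun i => ⟨le_rfl, hc i⟩, by simp at hd ⊢; omega⟩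
  | insert a s ha ih =>
    rw [sum_insert ha] at hd
    obtain ⟨g, hg, hgs⟩ := ih (d := d - min d (c a)) (by omega)
      (by have := sum_nonneg fun i (_ : i ∈ s) => hc i; omega)
    refine ⟨Function.update g a (min d (c a)), fun i => ?_, ?_⟩
    · rcases eq_or_ne i a with rfl | hi
      · simp [hd₀, hc i]
      · simpa [hi] using hg i
    · rw [sum_insert ha, sum_update_of_notMem ha, hgs, Function.update_self]
      ring

theorem sum_hexagon {ι : Type*} [Fintype ι] {A B S U W T : ι → ℤ}
    (hS : ∀ i, 0 ≤ S i) (hU : ∀ i, 0 ≤ U i) (hW : ∀ i, 0 ≤ W i) (hT : ∀ i, 0 ≤ T i) :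
    ∑ i, hexagon (A i) (B i) (S i) (U i) (W i) (T i) =
      hexagon (∑ i, A i) (∑ i, B i) (∑ i, S i) (∑ i, U i) (∑ i, W i) (∑ i, T i) := by
  classical
  ext x
  rw [Set.mem_fintype_sum]
  constructor
  · rintro ⟨y, hy, rfl⟩
    choose s u w t₀ t₁ h using hy
    refine ⟨∑ i, s i, ∑ i, u i, ∑ i, w i, ∑ i, t₀ i, ∑ i, t₁ i,
      sum_nonneg fun i _ => (h i).1, sum_le_sum fun i _ => (h i).2.1,
      sum_nonneg fun i _ => (h i).2.2.1, sum_le_sum fun i _ => (h i).2.2.2.1,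
      sum_nonneg fun i _ => (h i).2.2.2.2.1, sum_le_sum fun i _ => (h i).2.2.2.2.2.1,
      sum_nonneg fun i _ => (h i).2.2.2.2.2.2.1, sum_nonneg fun i _ => (h i).2.2.2.2.2.2.2.1,
      ?_, ?_, ?_⟩
    · rw [← sum_add_distrib]
      exact sum_le_sum fun i _ => (h i).2.2.2.2.2.2.2.2.1
    · simp only [Finset.sum_apply, (h _).2.2.2.2.2.2.2.2.2.1, sum_add_distrib]
    · simp only [Finset.sum_apply, (h _).2.2.2.2.2.2.2.2.2.2, sum_add_distrib, sum_sub_distrib]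
  · rintro ⟨s, u, w, t₀, t₁, hs, hsS, hu, huU, hw, hwW, ht₀, ht₁, htT, hx₀, hx₁⟩
    obtain ⟨σ, hσ, rfl⟩ := univ.exists_sum_eq_of_le_sum hS hs hsS
    obtain ⟨μ, hμ, rfl⟩ := univ.exists_sum_eq_of_le_sum hU hu huU
    obtain ⟨ν, hν, rfl⟩ := univ.exists_sum_eq_of_le_sum hW hw hwW
    obtain ⟨τ₀, hτ₀, rfl⟩ := univ.exists_sum_eq_of_le_sum hT ht₀ (by omega)
    obtain ⟨τ₁, hτ₁, rfl⟩ := univ.exists_sum_eq_of_le_sum (c := fun i => T i - τ₀ i)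
      (fun i => by linarith [hτ₀ i]) ht₁ (by rw [sum_sub_distrib]; omega)
    refine ⟨fun i => ![A i + σ i + μ i + τ₀ i, B i + (S i - σ i) + ν i + τ₁ i],
      fun i => ⟨σ i, μ i, ν i, τ₀ i, τ₁ i, (hσ i).1, (hσ i).2, (hμ i).1, (hμ i).2, (hν i).1,
        (hν i).2, (hτ₀ i).1, (hτ₁ i).1, by linarith [(hτ₁ i).2], by simp, by simp⟩, ?_⟩
    ext j
    fin_cases j
    · simp [hx₀, sum_add_distrib]
    · simp [hx₁, sum_add_distrib, sum_sub_distrib]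

/-- The best value per unit of capacity for an agent with weights `c`, `0` being idle capacity. -/
noncomputable def topWeight (c : Fin 2 → ℝ) : ℝ := max (max (c 0) (c 1)) 0

def optimalLoads (c : Fin 2 → ℝ) (φ : ℤ) : Set (Fin 2 → ℤ) :=
  {y | 0 ≤ y 0 ∧ 0 ≤ y 1 ∧ y 0 + y 1 ≤ φ ∧ c 0 * y 0 + c 1 * y 1 = topWeight c * φ}

section TopWeight

variable (c : Fin 2 → ℝ)

theorem apply_zero_le_topWeight : c 0 ≤ topWeight c := le_max_of_le_left (le_max_left _ _)

theorem apply_one_le_topWeight : c 1 ≤ topWeight c := le_max_of_le_left (le_max_right _ _)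

theorem topWeight_nonneg : 0 ≤ topWeight c := le_max_right _ _

theorem topWeight_eq_zero_of_ne (h₀ : ¬c 0 = topWeight c) (h₁ : ¬c 1 = topWeight c) :
    topWeight c = 0 := by
  unfold topWeight at *
  rcases max_choice (max (c 0) (c 1)) 0 with h | h
  · rw [h] at h₀ h₁
    rcases max_choice (c 0) (c 1) with h' | h'
    exacts [absurd h'.symm h₀, absurd h'.symm h₁]
  · exact h

theorem eq_topWeight_and_eq_topWeight_and_eq_zero_iff :
    c 0 = topWeight c ∧ c 1 = topWeight c ∧ topWeight c = 0 ↔ c = 0 := by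
  constructor
  · rintro ⟨h₀, h₁, hz⟩
    ext j
    fin_cases j
    exacts [h₀.trans hz, h₁.trans hz]
  · rintro rfl
    simp [topWeight]

variable {c} {φ y₀ y₁ : ℤ}

theorem mul_add_mul_le_topWeight_mul (hy₀ : 0 ≤ y₀) (hy₁ : 0 ≤ y₁) (hy : y₀ + y₁ ≤ φ) :
    c 0 * y₀ + c 1 * y₁ ≤ topWeight c * φ := by
  have : (y₀ : ℝ) + y₁ ≤ φ := by exact_mod_cast hy
  nlinarith [apply_zero_le_topWeight c, apply_one_le_topWeight c, topWeight_nonneg c,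
    (Int.cast_nonneg hy₀ : (0 : ℝ) ≤ y₀), (Int.cast_nonneg hy₁ : (0 : ℝ) ≤ y₁)]

theorem mul_add_mul_eq_topWeight_mul_iff (hy₀ : 0 ≤ y₀) (hy₁ : 0 ≤ y₁) (hy : y₀ + y₁ ≤ φ) :
    c 0 * y₀ + c 1 * y₁ = topWeight c * φ ↔
      (¬c 0 = topWeight c → y₀ = 0) ∧ (¬c 1 = topWeight c → y₁ = 0) ∧
        (¬topWeight c = 0 → y₀ + y₁ = φ) := by
  set m := topWeight c
  have t₀ : 0 ≤ (m - c 0) * y₀ :=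
    mul_nonneg (sub_nonneg.2 (apply_zero_le_topWeight c)) (by exact_mod_cast hy₀)
  have t₁ : 0 ≤ (m - c 1) * y₁ :=
    mul_nonneg (sub_nonneg.2 (apply_one_le_topWeight c)) (by exact_mod_cast hy₁)
  have t₂ : 0 ≤ m * (φ - y₀ - y₁) := mul_nonneg (topWeight_nonneg c) (by
    have : (y₀ : ℝ) + y₁ ≤ φ := by exact_mod_cast hy
    linarith)
  -- complementary slackness: the gap is a sum of three nonnegative terms
  have gap : m * φ - (c 0 * y₀ + c 1 * y₁) =
      (m - c 0) * y₀ + (m - c 1) * y₁ + m * (φ - y₀ - y₁) := by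
    ring
  rw [eq_comm, ← sub_eq_zero, gap, add_eq_zero_iff_of_nonneg (add_nonneg t₀ t₁) t₂,
    add_eq_zero_iff_of_nonneg t₀ t₁, mul_eq_zero, mul_eq_zero, mul_eq_zero, sub_eq_zero,
    sub_eq_zero, sub_sub, sub_eq_zero, or_iff_not_imp_left, or_iff_not_imp_left,
    or_iff_not_imp_left, and_assoc]
  norm_cast
  simp only [eq_comm]

end TopWeight

theorem optimalLoads_eq_hexagon (c : Fin 2 → ℝ) {φ : ℤ} (hφ : 0 ≤ φ) :
    optimalLoads c φ =
      hexagon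
        (if c 0 = topWeight c ∧ ¬c 1 = topWeight c ∧ ¬topWeight c = 0 then φ else 0)
        (if c 1 = topWeight c ∧ ¬c 0 = topWeight c ∧ ¬topWeight c = 0 then φ else 0)
        (if c 0 = topWeight c ∧ c 1 = topWeight c ∧ ¬topWeight c = 0 then φ else 0)
        (if c 0 = topWeight c ∧ ¬c 1 = topWeight c ∧ topWeight c = 0 then φ else 0)
        (if c 1 = topWeight c ∧ ¬c 0 = topWeight c ∧ topWeight c = 0 then φ else 0)
        (if c 0 = topWeight c ∧ c 1 = topWeight c ∧ topWeight c = 0 then φ else 0) := by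
  ext y
  rw [mem_hexagon_ite_iff (topWeight_eq_zero_of_ne c) hφ]
  exact and_congr_right fun hy₀ => and_congr_right fun hy₁ => and_congr_right fun hy =>
    mul_add_mul_eq_topWeight_mul_iff hy₀ hy₁ hy

theorem optimalLoads_nonempty (c : Fin 2 → ℝ) {φ : ℤ} (hφ : 0 ≤ φ) :
    (optimalLoads c φ).Nonempty := by
  rw [optimalLoads_eq_hexagon c hφ]
  exact hexagon_nonempty (ite_nonneg hφ le_rfl) (ite_nonneg hφ le_rfl) (ite_nonneg hφ le_rfl)
    (ite_nonneg hφ le_rfl)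

theorem maximizerSet_eq_sub_inner2 (Φ : ℤ) (f : (Fin 2 → ℤ) → ℝ) (p : Fin 2 → ℝ) :
    maximizerSet Φ f p = maximizerSet Φ (fun x => f x - inner2 p x) 0 := by
  ext x
  simp [maximizerSet, inner2]

section AssignmentValuation

variable {Φ : ℤ} {f : (Fin 2 → ℤ) → ℝ} {V : Type} [Fintype V] {w : V → Fin 2 → ℝ} {φ : V → ℤ}
  {x : Fin 2 → ℤ} {y : V → Fin 2 → ℤ}

theorem FeasibleAssign.mem_TPhi (hy : FeasibleAssign φ x y) : x ∈ TPhi (∑ i, φ i) := by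
  obtain ⟨hnonneg, hsum, hcap⟩ := hy
  refine ⟨?_, ?_, ?_⟩
  · rw [← hsum 0]; exact Finset.sum_nonneg fun i _ => hnonneg i 0
  · rw [← hsum 1]; exact Finset.sum_nonneg fun i _ => hnonneg i 1
  · rw [← hsum 0, ← hsum 1, ← Finset.sum_add_distrib]; exact Finset.sum_le_sum fun i _ => hcap i

theorem FeasibleAssign.sum_sub_inner2 (hy : FeasibleAssign φ x y) (p : Fin 2 → ℝ) :
    ∑ i, ((w i 0 - p 0) * (y i 0 : ℝ) + (w i 1 - p 1) * (y i 1 : ℝ)) =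
      ∑ i, (w i 0 * (y i 0 : ℝ) + w i 1 * (y i 1 : ℝ)) - inner2 p x := by
  rw [inner2, ← hy.2.1 0, ← hy.2.1 1]
  push_cast
  rw [Finset.mul_sum, Finset.mul_sum, ← Finset.sum_add_distrib, ← Finset.sum_sub_distrib]
  exact Finset.sum_congr rfl fun i _ => by ring

theorem IsAssignmentValuation.sub_inner2 (h : IsAssignmentValuation Φ f V w φ)
    (p : Fin 2 → ℝ) :
    IsAssignmentValuation Φ (fun x => f x - inner2 p x) V (fun i => w i - p) φ := by
  obtain ⟨hφ, hΦ, hf⟩ := h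
  refine ⟨hφ, hΦ, fun x hx => ⟨?_, ?_⟩⟩
  · obtain ⟨y, hy, hfx⟩ := (hf x hx).1
    exact ⟨y, hy, by simp only [Pi.sub_apply, hy.sum_sub_inner2, hfx]⟩
  · rintro _ ⟨y, hy, rfl⟩
    simp only [Pi.sub_apply, hy.sum_sub_inner2]
    exact sub_le_sub_right ((hf x hx).2 ⟨y, hy, rfl⟩) _

theorem IsAssignmentValuation.maximizerSet_zero (h : IsAssignmentValuation Φ f V w φ) :
    maximizerSet Φ f 0 = ∑ i, optimalLoads (w i) (φ i) := by
  obtain ⟨hφ, rfl, hf⟩ := h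
  set M := ∑ i, topWeight (w i) * φ i
  have le_M : ∀ x ∈ TPhi (∑ i, φ i), f x ≤ M := by
    intro x hx
    obtain ⟨y, hy, hfx⟩ := (hf x hx).1
    rw [hfx]
    exact Finset.sum_le_sum fun i _ =>
      mul_add_mul_le_topWeight_mul (hy.1 i 0) (hy.1 i 1) (hy.2.2 i)
  have eq_M : ∀ y : V → Fin 2 → ℤ, (∀ i, y i ∈ optimalLoads (w i) (φ i)) →
      ∑ i, y i ∈ TPhi (∑ i, φ i) ∧ f (∑ i, y i) = M := by
    intro y hy
    have hfeas : FeasibleAssign φ (∑ i, y i) y :=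
      ⟨fun i j => by fin_cases j; exacts [(hy i).1, (hy i).2.1],
        fun j => (Finset.sum_apply j _ y).symm, fun i => (hy i).2.2.1⟩
    refine ⟨hfeas.mem_TPhi, le_antisymm (le_M _ hfeas.mem_TPhi) ?_⟩
    calc M = ∑ i, (w i 0 * (y i 0 : ℝ) + w i 1 * (y i 1 : ℝ)) :=
          Finset.sum_congr rfl fun i _ => (hy i).2.2.2.symm
      _ ≤ f (∑ i, y i) := (hf _ hfeas.mem_TPhi).2 ⟨y, hfeas, rfl⟩
  choose y₀ hy₀ using fun i => optimalLoads_nonempty (w i) (hφ i).le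
  obtain ⟨hx₀, hfx₀⟩ := eq_M y₀ hy₀
  ext x
  simp only [maximizerSet, inner2, Pi.zero_apply, zero_mul, add_zero, sub_zero,
    Set.mem_fintype_sum]
  constructor
  · rintro ⟨hx, hmax⟩
    obtain ⟨y, hy, hfx⟩ := (hf x hx).1
    have hsum : ∑ i, (w i 0 * (y i 0 : ℝ) + w i 1 * (y i 1 : ℝ)) = M :=
      le_antisymm (hfx ▸ le_M x hx) (hfx₀ ▸ hfx ▸ hmax _ hx₀)
    have hterm := (Finset.sum_eq_sum_iff_of_le fun i _ =>
      mul_add_mul_le_topWeight_mul (hy.1 i 0) (hy.1 i 1) (hy.2.2 i)).1 hsum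
    exact ⟨y, fun i => ⟨hy.1 i 0, hy.1 i 1, hy.2.2 i, hterm i (Finset.mem_univ i)⟩,
      funext fun j => by rw [Finset.sum_apply, hy.2.1 j]⟩
  · rintro ⟨y, hy, rfl⟩
    obtain ⟨hxT, hfx⟩ := eq_M y hy
    exact ⟨hxT, fun z hz => hfx ▸ le_M z hz⟩

theorem IsAssignmentValuation.typeQ_maximizerSet_zero (h : IsAssignmentValuation Φ f V w φ) :
    typeQ (maximizerSet Φ f 0) = ∑ i, if w i = 0 then φ i else 0 := by
  have hφ : ∀ i, 0 ≤ φ i := fun i => (h.1 i).le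
  rw [h.maximizerSet_zero]
  simp only [optimalLoads_eq_hexagon _ (hφ _)]
  rw [sum_hexagon (fun i => ite_nonneg (hφ i) le_rfl) (fun i => ite_nonneg (hφ i) le_rfl)
      (fun i => ite_nonneg (hφ i) le_rfl) (fun i => ite_nonneg (hφ i) le_rfl),
    typeQ_hexagon (Finset.sum_nonneg fun i _ => ite_nonneg (hφ i) le_rfl)
      (Finset.sum_nonneg fun i _ => ite_nonneg (hφ i) le_rfl)
      (Finset.sum_nonneg fun i _ => ite_nonneg (hφ i) le_rfl)
      (Finset.sum_nonneg fun i _ => ite_nonneg (hφ i) le_rfl)]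
  simp only [eq_topWeight_and_eq_topWeight_and_eq_zero_iff]

end AssignmentValuation

theorem stmt10_general (Φ : ℤ) (f : (Fin 2 → ℤ) → ℝ) (V : Type) [Fintype V]
    (w : V → Fin 2 → ℝ) (φ : V → ℤ) (h : IsAssignmentValuation Φ f V w φ)
    (p : Fin 2 → ℝ) (hp : ∀ i : V, p ≠ w i) :
    typeQ (maximizerSet Φ f p) = 0 := by
  rw [maximizerSet_eq_sub_inner2, (h.sub_inner2 p).typeQ_maximizerSet_zero]
  exact Finset.sum_eq_zero fun i _ => if_neg (sub_ne_zero.2 (hp i).symm)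

theorem stmt10 (Φ : ℤ) (hΦ : 0 < Φ) (f : (Fin 2 → ℤ) → ℝ) (V : Type) [Fintype V]
    (w : V → Fin 2 → ℝ) (φ : V → ℤ) (h : IsAssignmentValuation Φ f V w φ)
    (hirr : ∀ i j : V, i ≠ j → w i ≠ w j)
    (p : Fin 2 → ℝ) (h2 : TwoDimensional (maximizerSet Φ f p))
    (hp : ∀ i : V, p ≠ w i) :
    typeQ (maximizerSet Φ f p) = 0 :=
  stmt10_general Φ f V w φ h p hp
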